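/- Let Z be a measurable space, V a positive natural number, and Y a finite nonempty type with a one-hot encoding e : Y → (Fin V → ℝ). For measurable h : Z → (Fin V → ℝ), define the L1 loss ℓ_h(z, y) = ∑_{i ∈ Fin V} |h(z)(i) − e(y)(i)|. Let H be a nonempty set of such measurable functions with ℓ_{h'}(z, y) ≤ C for all h' ∈ H, z, y. Let p : Y → ℝ be nonnegative with ∑_y p(y) = 1, and for each y let ν_A(y), ν_T(y) be probability measures on Z. Define the test risk R_te(h) = ∑_y p(y) · ∫ ℓ_h(z, y) dν_A(y)(z), the population training risk R_tr(h) = ∑_y p(y) · ∫ ℓ_h(z, y) dν_T(y)(z), and for a finite training sample (z_1, y_1), …, (z_N, y_N) ∈ Z × Y the empirical training risk R̂_tr(h) = (1/N) ∑_{i=1}^N ℓ_h(z_i, y_i). Define disc(y) = ⨆_{h' ∈ H} |∫ ℓ_{h'}(z, y) dν_A(y)(z) − ∫ ℓ_{h'}(z, y) dν_T(y)(z)|. Then for every h ∈ H and every ε ≥ 0 such that |R_tr(h) − R̂_tr(h)| ≤ ε, one has R_te(h) ≤ R̂_tr(h) + max_{y ∈ Y} disc(y) + ε. -/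

import Mathlib

/-!
For each class `y`, the risk of `h` under `νA y` exceeds its risk under `νT y` by at most the
discrepancy `disc y`, a finite supremum since the losses are bounded by `C`. Averaging over the
classes with the weights `p` bounds the test risk by the training risk plus `max_y disc y`, and the
training risk is at most the empirical risk plus `ε`.
-/

open MeasureTheory

section Discrepancy

variable {α ι : Type*} [MeasurableSpace α] {μ ν : Measure α}
  [IsFiniteMeasure μ] [IsFiniteMeasure ν]

lemma bddAbove_range_abs_integral_sub {f : ι → α → ℝ} {C : ℝ} (hf : ∀ i x, |f i x| ≤ C) :
    BddAbove (Set.range fun i => |∫ x, f i x ∂μ - ∫ x, f i x ∂ν|) := by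
  have hint (ρ : Measure α) [IsFiniteMeasure ρ] (i : ι) :
      |∫ x, f i x ∂ρ| ≤ C * ρ.real .univ := by
    simpa only [Real.norm_eq_abs] using norm_integral_le_of_norm_le_const (μ := ρ)
      (.of_forall fun x => (Real.norm_eq_abs _).trans_le (hf i x))
  refine ⟨C * μ.real .univ + C * ν.real .univ, ?_⟩
  rintro _ ⟨i, rfl⟩
  exact (abs_sub _ _).trans (add_le_add (hint μ i) (hint ν i))

lemma integral_le_integral_add_iSup_abs_integral_sub {f : ι → α → ℝ} {C : ℝ}
    (hf : ∀ i x, |f i x| ≤ C) (i : ι) :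
    ∫ x, f i x ∂μ ≤ ∫ x, f i x ∂ν + ⨆ j, |∫ x, f j x ∂μ - ∫ x, f j x ∂ν| := by
  have hi := le_ciSup (bddAbove_range_abs_integral_sub (μ := μ) (ν := ν) hf) i
  linarith [le_abs_self (∫ x, f i x ∂μ - ∫ x, f i x ∂ν)]

end Discrepancy

lemma Finset.sum_mul_le_sum_mul_add_sup' {ι : Type*} [Fintype ι] [Nonempty ι]
    {p a b d : ι → ℝ} (hp : ∀ i, 0 ≤ p i) (hp1 : ∑ i, p i = 1) (hab : ∀ i, a i ≤ b i + d i) :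
    ∑ i, p i * a i ≤ ∑ i, p i * b i + univ.sup' univ_nonempty d :=
  calc ∑ i, p i * a i
      ≤ ∑ i, p i * (b i + univ.sup' univ_nonempty d) :=
        sum_le_sum fun i _ => mul_le_mul_of_nonneg_left
          ((hab i).trans (add_le_add_right (le_sup' d (mem_univ i)) _)) (hp i)
    _ = ∑ i, p i * b i + univ.sup' univ_nonempty d := by
        simp only [mul_add, sum_add_distrib, ← sum_mul, hp1, one_mul]

theorem generalization_bound_core_general
    {Z : Type*} [MeasurableSpace Z] {V : ℕ}
    {Y : Type*} [Fintype Y] [Nonempty Y]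
    (e : Y → Fin V → ℝ)
    (H : Set (Z → Fin V → ℝ))
    (C : ℝ)
    (hbd : ∀ h' ∈ H, ∀ (z : Z) (y : Y), ∑ i, |h' z i - e y i| ≤ C)
    (p : Y → ℝ) (hp : ∀ y, 0 ≤ p y) (hpsum : ∑ y, p y = 1)
    (νA νT : Y → Measure Z)
    (hA : ∀ y, IsProbabilityMeasure (νA y)) (hT : ∀ y, IsProbabilityMeasure (νT y))
    (N : ℕ) (sample : Fin N → Z × Y)
    (h : Z → Fin V → ℝ) (hh : h ∈ H) (ε : ℝ)
    (hdev :
      |∑ y, p y * ∫ z, (∑ i, |h z i - e y i|) ∂(νT y) -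
        (1 / (N : ℝ)) * (∑ k, ∑ i, |h (sample k).1 i - e (sample k).2 i|)| ≤ ε) :
    ∑ y, p y * ∫ z, (∑ i, |h z i - e y i|) ∂(νA y) ≤
      (1 / (N : ℝ)) * ∑ k, ∑ i, |h (sample k).1 i - e (sample k).2 i| +
      Finset.univ.sup' Finset.univ_nonempty (fun y =>
        ⨆ h' : H, |∫ z, (∑ i, |(h' : Z → Fin V → ℝ) z i - e y i|) ∂(νA y) -
          ∫ z, (∑ i, |(h' : Z → Fin V → ℝ) z i - e y i|) ∂(νT y)|) +
      ε := by
  have hloss : ∀ y (h' : H) z, |(∑ i, |(h' : Z → Fin V → ℝ) z i - e y i|)| ≤ C :=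
    fun y h' z => (abs_of_nonneg (by positivity)).trans_le (hbd h' h'.2 z y)
  have hclass : ∀ y, ∫ z, (∑ i, |h z i - e y i|) ∂(νA y) ≤
      ∫ z, (∑ i, |h z i - e y i|) ∂(νT y) +
        ⨆ h' : H, |∫ z, (∑ i, |(h' : Z → Fin V → ℝ) z i - e y i|) ∂(νA y) -
          ∫ z, (∑ i, |(h' : Z → Fin V → ℝ) z i - e y i|) ∂(νT y)| := fun y =>
    integral_le_integral_add_iSup_abs_integral_sub (hloss y) ⟨h, hh⟩
  have hrisk := Finset.sum_mul_le_sum_mul_add_sup' hp hpsum hclass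
  linarith [(abs_le.mp hdev).2]

/-- Deterministic core of the generalization bound (Theorem 3.1): the test risk of a hypothesis
`h ∈ H` is bounded by its empirical training risk, plus the maximal per-class L1 discrepancy
between the audio and text conditional embedding distributions, plus the deviation `ε` between
the population and empirical training risks. -/
theorem generalization_bound_core
    {Z : Type*} [MeasurableSpace Z] {V : ℕ} (hV : 0 < V)
    {Y : Type*} [Fintype Y] [Nonempty Y]
    (e : Y → Fin V → ℝ) (hone : ∀ y, ∃ i : Fin V, e y = Pi.single i 1)
    (H : Set (Z → Fin V → ℝ)) (hHne : H.Nonempty) (hHmeas : ∀ h ∈ H, Measurable h)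
    (C : ℝ) (hC : 0 ≤ C)
    (hbd : ∀ h' ∈ H, ∀ (z : Z) (y : Y), ∑ i, |h' z i - e y i| ≤ C)
    (p : Y → ℝ) (hp : ∀ y, 0 ≤ p y) (hpsum : ∑ y, p y = 1)
    (νA νT : Y → Measure Z)
    (hA : ∀ y, IsProbabilityMeasure (νA y)) (hT : ∀ y, IsProbabilityMeasure (νT y))
    (N : ℕ) (hN : 0 < N) (sample : Fin N → Z × Y)
    (h : Z → Fin V → ℝ) (hh : h ∈ H) (ε : ℝ) (hε : 0 ≤ ε)
    (hdev :
      |∑ y, p y * ∫ z, (∑ i, |h z i - e y i|) ∂(νT y) -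
        (1 / (N : ℝ)) * (∑ k, ∑ i, |h (sample k).1 i - e (sample k).2 i|)| ≤ ε) :
    ∑ y, p y * ∫ z, (∑ i, |h z i - e y i|) ∂(νA y) ≤
      (1 / (N : ℝ)) * ∑ k, ∑ i, |h (sample k).1 i - e (sample k).2 i| +
      Finset.univ.sup' Finset.univ_nonempty (fun y =>
        ⨆ h' : H, |∫ z, (∑ i, |(h' : Z → Fin V → ℝ) z i - e y i|) ∂(νA y) -
          ∫ z, (∑ i, |(h' : Z → Fin V → ℝ) z i - e y i|) ∂(νT y)|) +
      ε :=
  generalization_bound_core_general e H C hbd p hp hpsum νA νT hA hT N sample h hh ε hdev
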